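/- arXiv:1211.2709 — 2 statements merged into one kernel-verified Lean document; each statement's English description precedes it below -/
import Mathlib

section
/- Let L, M : ℝ × ℝ → ℝ be differentiable functions and let M_S > 0 be a constant. Let Y₀ ∈ ℝ and let r : ℝ → ℝ be differentiable at Y₀ with r(Y₀) = R₀, and suppose L(Y, r(Y)) = M(Y, r(Y)) + M_S for all Y in a neighborhood of Y₀. If at the point (Y₀, R₀) the partial derivatives satisfy 0 < ∂M/∂Y < ∂L/∂Y, ∂L/∂R > 0 and ∂M/∂R < 0 (the liquidity-trap phase), then the derivative of r at Y₀ is strictly negative; i.e. the middle arc of the S-bent LM curve is strictly decreasing. -/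
open Filter Topology Set

section GraphLevelSet

variable {𝕜 E : Type*} [NontriviallyNormedField 𝕜] [NormedAddCommGroup E] [NormedSpace 𝕜 E]

theorem ContinuousLinearMap.apply_prod_one (f : 𝕜 × 𝕜 →L[𝕜] E) (d : 𝕜) :
    f (1, d) = f (1, 0) + d • f (0, 1) := by
  rw [← map_smul, ← map_add]
  simp

theorem HasFDerivAt.apply_graph_tangent_eq_zero {F : 𝕜 × 𝕜 → E} {F' : 𝕜 × 𝕜 →L[𝕜] E}
    {r : 𝕜 → 𝕜} {d x : 𝕜} {c : E} (hF : HasFDerivAt F F' (x, r x)) (hr : HasDerivAt r d x)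
    (hc : (fun y => F (y, r y)) =ᶠ[𝓝 x] fun _ => c) :
    F' (1, d) = 0 := by
  have hcomp : HasDerivAt (fun y => F (y, r y)) (F' (1, d)) x :=
    hF.comp_hasDerivAt x ((hasDerivAt_id x).prodMk hr)
  exact hcomp.unique ((hasDerivAt_const x c).congr_of_eventuallyEq hc)

end GraphLevelSet

theorem lm_curve_strictly_decreasing_liquidity_trap_general
    (L M : ℝ × ℝ → ℝ) (hL : Differentiable ℝ L) (hM : Differentiable ℝ M)
    (M_S : ℝ)
    (Y₀ R₀ : ℝ) (r : ℝ → ℝ)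
    (hr : DifferentiableAt ℝ r Y₀) (hrY₀ : r Y₀ = R₀)
    (heq : ∀ᶠ Y in 𝓝 Y₀, L (Y, r Y) = M (Y, r Y) + M_S)
    (hMYLY : fderiv ℝ M (Y₀, R₀) (1, 0) < fderiv ℝ L (Y₀, R₀) (1, 0))
    (hLR : 0 < fderiv ℝ L (Y₀, R₀) (0, 1))
    (hMR : fderiv ℝ M (Y₀, R₀) (0, 1) < 0) :
    deriv r Y₀ < 0 := by
  subst hrY₀
  have hexcess : HasFDerivAt (fun p => L p - M p)
      (fderiv ℝ L (Y₀, r Y₀) - fderiv ℝ M (Y₀, r Y₀)) (Y₀, r Y₀) :=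
    (hL _).hasFDerivAt.sub (hM _).hasFDerivAt
  have hconst : (fun Y => L (Y, r Y) - M (Y, r Y)) =ᶠ[𝓝 Y₀] fun _ => M_S :=
    heq.mono fun Y h => by simp only [h, add_sub_cancel_left]
  have htangent := hexcess.apply_graph_tangent_eq_zero hr.hasDerivAt hconst
  rw [ContinuousLinearMap.apply_prod_one] at htangent
  simp only [sub_apply, smul_eq_mul] at htangent
  -- `(L_Y - M_Y) + r' (L_R - M_R) = 0` with both brackets positive
  nlinarith

/-- In the liquidity-trap phase (`∂L/∂R > 0`, `∂M/∂R < 0`, with the usual income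
properties `0 < ∂M/∂Y < ∂L/∂Y`), the middle arc of the S-bent LM curve
(locally parametrized as `R = r(Y)`) is strictly decreasing. -/
theorem lm_curve_strictly_decreasing_liquidity_trap
    (L M : ℝ × ℝ → ℝ) (hL : Differentiable ℝ L) (hM : Differentiable ℝ M)
    (M_S : ℝ) (hMS : 0 < M_S)
    (Y₀ R₀ : ℝ) (r : ℝ → ℝ)
    (hr : DifferentiableAt ℝ r Y₀) (hrY₀ : r Y₀ = R₀)
    (heq : ∀ᶠ Y in 𝓝 Y₀, L (Y, r Y) = M (Y, r Y) + M_S)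
    (hMY : 0 < fderiv ℝ M (Y₀, R₀) (1, 0))
    (hMYLY : fderiv ℝ M (Y₀, R₀) (1, 0) < fderiv ℝ L (Y₀, R₀) (1, 0))
    (hLR : 0 < fderiv ℝ L (Y₀, R₀) (0, 1))
    (hMR : fderiv ℝ M (Y₀, R₀) (0, 1) < 0) :
    deriv r Y₀ < 0 :=
  lm_curve_strictly_decreasing_liquidity_trap_general L M hL hM M_S Y₀ R₀ r hr hrY₀ heq hMYLY hLR
    hMR
end

section
/- Let f : ℝ → ℝ be continuous on [0,∞) and let 0 < P < Q. Suppose f is strictly decreasing on [0,P], strictly increasing on [P,Q], and strictly decreasing on [Q,∞). If f(0) > 0, f(P) > 0, and f(x) → −∞ as x → ∞, then the set { x ∈ [0,∞) | f(x) = 0 } has exactly one element, and this element lies in (Q,∞). -/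
open Filter Topology Set

/-!
On `[0, Q]` the function attains its minimum at `P`, where it is positive, so every zero
lies beyond `Q`. On `[Q, ∞)` it is continuous, strictly decreasing, positive at `Q` and tends
to `-∞`: the intermediate value theorem gives a zero there and strict monotonicity makes it
unique.
-/

theorem StrictAntiOn.exists_eq_singleton_of_tendsto_atBot
    {α δ : Type*} [ConditionallyCompleteLinearOrder α] [TopologicalSpace α] [OrderTopology α]
    [DenselyOrdered α] [LinearOrder δ] [TopologicalSpace δ] [OrderClosedTopology δ]
    {f : α → δ} {a : α} {c : δ} (hf : StrictAntiOn f (Ici a)) (hc : ContinuousOn f (Ici a))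
    (hbot : Tendsto f atTop atBot) (ha : c < f a) :
    ∃ x, a < x ∧ {y | a ≤ y ∧ f y = c} = {x} := by
  obtain ⟨x, hax, hfx⟩ := intermediate_value_Ioi' hc hbot ha
  refine ⟨x, hax, Set.ext fun y => ⟨fun ⟨hay, hfy⟩ => ?_, ?_⟩⟩
  · exact hf.injOn hay (mem_Ici.2 hax.le) (hfy.trans hfx.symm)
  · rintro rfl
    exact ⟨hax.le, hfx⟩

theorem exactly_one_stationary_point_general
    (f : ℝ → ℝ) (P Q : ℝ) (hP : 0 < P) (hPQ : P < Q)
    (hc : ContinuousOn f (Ici 0))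
    (h₁ : StrictAntiOn f (Icc 0 P))
    (h₂ : StrictMonoOn f (Icc P Q))
    (h₃ : StrictAntiOn f (Ici Q))
    (hfP : 0 < f P)
    (hbot : Tendsto f atTop atBot) :
    ∃ x : ℝ, Q < x ∧ {y : ℝ | 0 ≤ y ∧ f y = 0} = {x} := by
  have hQ : 0 ≤ Q := (hP.trans hPQ).le
  have hfQ : 0 < f Q := hfP.trans (h₂ (left_mem_Icc.2 hPQ.le) (right_mem_Icc.2 hPQ.le) hPQ)
  have hmin : IsMinOn f (Icc 0 Q) P := isMinOn_Icc_of_anti_mono h₁.antitoneOn h₂.monotoneOn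
  have hzeros : {y | 0 ≤ y ∧ f y = 0} = {y | Q ≤ y ∧ f y = 0} := by
    ext y
    refine ⟨fun ⟨hy, hfy⟩ => ⟨le_of_not_gt fun hyQ => ?_, hfy⟩,
      fun ⟨hQy, hfy⟩ => ⟨hQ.trans hQy, hfy⟩⟩
    have : f P ≤ f y := hmin ⟨hy, hyQ.le⟩
    linarith
  rw [hzeros]
  exact h₃.exists_eq_singleton_of_tendsto_atBot (hc.mono (Ici_subset_Ici.2 hQ)) hbot hfQ

/-- For aggregate income outside the interval between the bifurcation values
(here: `f 0 > 0`, `f P > 0` and `f → −∞` at infinity), the excess-demand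
function has exactly one zero on `[0,∞)`, and this zero lies in `(Q,∞)`. -/
theorem exactly_one_stationary_point
    (f : ℝ → ℝ) (P Q : ℝ) (hP : 0 < P) (hPQ : P < Q)
    (hc : ContinuousOn f (Ici 0))
    (h₁ : StrictAntiOn f (Icc 0 P))
    (h₂ : StrictMonoOn f (Icc P Q))
    (h₃ : StrictAntiOn f (Ici Q))
    (hf0 : 0 < f 0) (hfP : 0 < f P)
    (hbot : Tendsto f atTop atBot) :
    ∃ x : ℝ, Q < x ∧ {y : ℝ | 0 ≤ y ∧ f y = 0} = {x} :=
  exactly_one_stationary_point_general f P Q hP hPQ hc h₁ h₂ h₃ hfP hbot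
end
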